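/- arXiv:1909.00058 — 3 statements merged into one kernel-verified Lean document; each statement's English description precedes it below -/
import Mathlib

section
/- For 0 < q < 1 and all x in the interval of convergence |x| < 1/(1-q), the Borel-type integral identity holds: ∫_0^∞ e^{-s} C_0^{(q,1)}(x s) ds = Σ_{r=0}^∞ (-x)^r/[r]_q! = e_q(x). -/
/-- The q-factorial `[n]_q! = ∏_{r=1}^n (1-q^r)/(1-q)`. -/
noncomputable def qFactorial (q : ℝ) (n : ℕ) : ℝ :=
  ∏ r ∈ Finset.Icc 1 n, (1 - q ^ r) / (1 - q)

/-- The (q,1)-Tricomi function `C_0^{(q,1)}(y) = Σ_r (-y)^r/(r! [r]_q!)`. -/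
noncomputable def qTricomi (q y : ℝ) : ℝ :=
  ∑' r : ℕ, (-y) ^ r / (r.factorial * qFactorial q r)

/-!
Expand `C_0^{(q,1)}(xs)` as a power series in `s` and integrate term by term against `e^{-s}`:
the Gamma integral `∫_0^∞ e^{-s} s^r ds = r!` cancels the `r!` in each coefficient. Exchanging
sum and integral is justified because the series of the integrals of the absolute values is
`Σ |x|^r / [r]_q!`, which converges by the ratio test: its ratios `|x| (1-q) / (1-q^{r+1})`
tend to `|x| (1-q) < 1`.
-/

open MeasureTheory Real Filter Set Topology

theorem integrableOn_exp_neg_mul_pow (r : ℕ) :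
    IntegrableOn (fun s : ℝ => exp (-s) * s ^ r) (Ioi 0) := by
  refine (GammaIntegral_convergent (s := (r : ℝ) + 1) (by positivity)).congr_fun
    (fun s _ => ?_) measurableSet_Ioi
  simp only [add_sub_cancel_right, rpow_natCast]

theorem integral_exp_neg_mul_pow (r : ℕ) :
    ∫ s in Ioi (0 : ℝ), exp (-s) * s ^ r = r.factorial := by
  rw [← Gamma_nat_eq_factorial, Gamma_eq_integral (by positivity)]
  refine setIntegral_congr_fun measurableSet_Ioi (fun s _ => ?_)
  rw [add_sub_cancel_right, rpow_natCast]

theorem integral_exp_neg_mul_tsum_pow {c : ℕ → ℝ}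
    (hc : Summable fun r => |c r| * r.factorial) :
    ∫ s in Ioi (0 : ℝ), exp (-s) * ∑' r, c r * s ^ r = ∑' r, c r * r.factorial := by
  set F : ℕ → ℝ → ℝ := fun r s => c r * (exp (-s) * s ^ r)
  have hF_int (r : ℕ) : IntegrableOn (F r) (Ioi 0) := (integrableOn_exp_neg_mul_pow r).const_mul _
  have hF_integral (r : ℕ) : ∫ s in Ioi (0 : ℝ), F r s = c r * r.factorial := by
    rw [integral_const_mul, integral_exp_neg_mul_pow]
  have hF_integral_norm (r : ℕ) : ∫ s in Ioi (0 : ℝ), ‖F r s‖ = |c r| * r.factorial := by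
    rw [← integral_exp_neg_mul_pow, ← integral_const_mul]
    refine setIntegral_congr_fun measurableSet_Ioi (fun s (hs : 0 < s) => ?_)
    rw [norm_mul, norm_eq_abs, norm_of_nonneg (by positivity)]
  calc ∫ s in Ioi (0 : ℝ), exp (-s) * ∑' r, c r * s ^ r
      = ∫ s in Ioi (0 : ℝ), ∑' r, F r s := by
        congr 1 with s
        rw [← tsum_mul_left]
        exact tsum_congr fun r => by ring
    _ = ∑' r, ∫ s in Ioi (0 : ℝ), F r s :=
        (integral_tsum_of_summable_integral_norm hF_int (hc.congr fun r =>
          (hF_integral_norm r).symm)).symm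
    _ = ∑' r, c r * r.factorial := tsum_congr hF_integral

section QFactorial

variable {q : ℝ}

theorem qFactorial_succ (n : ℕ) :
    qFactorial q (n + 1) = qFactorial q n * ((1 - q ^ (n + 1)) / (1 - q)) :=
  Finset.prod_Icc_succ_top (Nat.le_add_left 1 n) _

theorem one_sub_pow_pos (hq : |q| < 1) {n : ℕ} (hn : n ≠ 0) : 0 < 1 - q ^ n := by
  have : q ^ n < 1 := (le_abs_self _).trans_lt <| by
    rw [abs_pow]
    exact pow_lt_one₀ (abs_nonneg q) hq hn
  linarith

theorem qFactorial_pos (hq : |q| < 1) (n : ℕ) : 0 < qFactorial q n :=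
  Finset.prod_pos fun r hr => div_pos (one_sub_pow_pos hq (Nat.one_le_iff_ne_zero.mp (Finset.mem_Icc.mp hr).1))
    (by simpa using one_sub_pow_pos hq one_ne_zero)

theorem summable_pow_div_qFactorial (hq : |q| < 1) {y : ℝ} (hy0 : 0 ≤ y) (hy : y * (1 - q) < 1) :
    Summable fun r : ℕ => y ^ r / qFactorial q r := by
  rcases hy0.eq_or_lt with rfl | hy0
  · exact summable_of_ne_finset_zero (s := {0}) fun r hr => by
      simp [zero_pow (Finset.notMem_singleton.mp hr)]
  refine summable_of_ratio_test_tendsto_lt_one hy (.of_forall fun r =>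
    (div_pos (pow_pos hy0 r) (qFactorial_pos hq r)).ne') ?_
  have hratio (r : ℕ) : ‖y ^ (r + 1) / qFactorial q (r + 1)‖ / ‖y ^ r / qFactorial q r‖
      = y * ((1 - q) / (1 - q ^ (r + 1))) := by
    have := qFactorial_pos hq r
    have := qFactorial_pos hq (r + 1)
    have := one_sub_pow_pos hq r.succ_ne_zero
    have := one_sub_pow_pos hq one_ne_zero
    rw [norm_of_nonneg (by positivity), norm_of_nonneg (by positivity), qFactorial_succ]
    field_simp
    ring
  have hlim : Tendsto (fun r : ℕ => 1 - q ^ (r + 1)) atTop (𝓝 1) := by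
    simpa using tendsto_const_nhds.sub
      ((tendsto_pow_atTop_nhds_zero_of_abs_lt_one hq).comp (tendsto_add_atTop_nat 1))
  simp only [hratio]
  simpa using tendsto_const_nhds.mul (tendsto_const_nhds.div hlim one_ne_zero)

end QFactorial

theorem borel_transform_qTricomi (q : ℝ) (hq0 : 0 < q) (hq1 : q < 1)
    (x : ℝ) (hx : |x| < 1 / (1 - q)) :
    ∫ s in Set.Ioi (0 : ℝ), Real.exp (-s) * qTricomi q (x * s)
      = ∑' r : ℕ, (-x) ^ r / qFactorial q r := by
  have hq : |q| < 1 := abs_lt.mpr ⟨by linarith, hq1⟩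
  have hfac (r : ℕ) : (r.factorial : ℝ) * qFactorial q r ≠ 0 :=
    mul_ne_zero (Nat.cast_ne_zero.mpr r.factorial_ne_zero) (qFactorial_pos hq r).ne'
  set c : ℕ → ℝ := fun r => (-x) ^ r / (r.factorial * qFactorial q r)
  have hseries (s : ℝ) : qTricomi q (x * s) = ∑' r, c r * s ^ r :=
    tsum_congr fun r => by rw [neg_mul_eq_neg_mul, mul_pow, mul_div_right_comm]
  have hcoeff (r : ℕ) : c r * r.factorial = (-x) ^ r / qFactorial q r := by
    simp only [c]
    field_simp [hfac r]
  have hmajorant : Summable fun r => |c r| * r.factorial := by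
    refine (summable_pow_div_qFactorial hq (abs_nonneg x)
      ((lt_div_iff₀ (by linarith)).mp hx)).congr fun r => ?_
    rw [← abs_of_pos (Nat.cast_pos.mpr r.factorial_pos : (0 : ℝ) < r.factorial), ← abs_mul, hcoeff,
      abs_div, abs_pow, abs_neg, abs_of_pos (qFactorial_pos hq r)]
  simp_rw [hseries]
  rw [integral_exp_neg_mul_tsum_pow hmajorant]
  exact tsum_congr hcoeff
end

section
/- For 0 < q < 1, defining π_q = Γ_q(1/2)^2, the q-Wallis product formula holds: π_q = ([2]_{√q}/[∞]_{√q}) · Π_{n=0}^∞ ([2n+2]_{√q}/[2n+1]_{√q})^2, where [∞]_{√q} = 1/(1-√q). -/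
/-- The Thomae–Jackson q-Gamma function. -/
noncomputable def qGamma (q x : ℝ) : ℝ :=
  (1 - q) ^ (1 - x) * ∏' n : ℕ, (1 - q ^ (n + 1)) / (1 - q ^ ((n : ℝ) + x))

/-- The q-number with base `p` and natural exponent `m`. -/
noncomputable def qNum (p : ℝ) (m : ℕ) : ℝ := (1 - p ^ m) / (1 - p)

/-- `[∞]_p = 1/(1-p)`. -/
noncomputable def qNumInf (p : ℝ) : ℝ := 1 / (1 - p)

/-!
With `p = √q`, the factors of `Γ_q(1/2)` are `(1 - q^(n+1)) / (1 - q^(n+1/2)) = [2n+2]_p / [2n+1]_p`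
and its prefactor is `(1 - q)^(1/2)`. Squaring, `1 - q = 1 - p^2 = [2]_p / [∞]_p`; the only analytic
input is that the product converges, so that its square is the product of the squares.
-/

open Real

lemma qNum_div_qNum {p : ℝ} (hp : p ≠ 1) (m k : ℕ) :
    qNum p m / qNum p k = (1 - p ^ m) / (1 - p ^ k) :=
  div_div_div_cancel_right₀ (sub_ne_zero.2 hp.symm) _ _

lemma qNum_two_div_qNumInf {p : ℝ} (hp : p ≠ 1) : qNum p 2 / qNumInf p = 1 - p ^ 2 := by
  have : 1 - p ≠ 0 := sub_ne_zero.2 hp.symm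
  rw [qNum, qNumInf]
  field_simp

lemma one_sub_pow_succ_div_one_sub_pow {p : ℝ} (hp0 : 0 ≤ p) (hp1 : p < 1) (m : ℕ) :
    (1 - p ^ (m + 2)) / (1 - p ^ (m + 1))
      = 1 + p ^ (m + 1) * ((1 - p) / (1 - p ^ (m + 1))) := by
  have : 1 - p ^ (m + 1) ≠ 0 := (sub_pos.2 (pow_lt_one₀ hp0 hp1 m.succ_ne_zero)).ne'
  field_simp
  ring

lemma multipliable_one_sub_pow_even_div_one_sub_pow_odd {p : ℝ} (hp0 : 0 ≤ p) (hp1 : p < 1) :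
    Multipliable fun n : ℕ => (1 - p ^ (2 * n + 2)) / (1 - p ^ (2 * n + 1)) := by
  have hlt : ∀ n : ℕ, p ^ (2 * n + 1) < 1 := fun n => pow_lt_one₀ hp0 hp1 (by omega)
  simp_rw [one_sub_pow_succ_div_one_sub_pow hp0 hp1]
  refine Real.multipliable_one_add_of_summable <|
    (summable_geometric_of_lt_one hp0 hp1).of_nonneg_of_le (fun n => ?_) (fun n => ?_)
  · exact mul_nonneg (by positivity) (div_nonneg (by linarith) (by linarith [hlt n]))
  · have hle : p ^ (2 * n + 1) ≤ p := by
      simpa using pow_le_pow_of_le_one hp0 hp1.le (show 1 ≤ 2 * n + 1 by omega)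
    calc p ^ (2 * n + 1) * ((1 - p) / (1 - p ^ (2 * n + 1)))
        ≤ p ^ (2 * n + 1) * 1 := by
          gcongr
          exact div_le_one_of_le₀ (by linarith) (by linarith [hlt n])
      _ ≤ p ^ n := by
          rw [mul_one]
          exact pow_le_pow_of_le_one hp0 hp1.le (by omega)

lemma qGamma_one_half {q : ℝ} (hq : 0 < q) :
    qGamma q (1 / 2)
      = √(1 - q) * ∏' n : ℕ, (1 - √q ^ (2 * n + 2)) / (1 - √q ^ (2 * n + 1)) := by
  have hsq : √q ^ 2 = q := sq_sqrt hq.le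
  rw [qGamma, show (1 : ℝ) - 1 / 2 = 1 / 2 by norm_num, ← sqrt_eq_rpow]
  congr 1
  refine tprod_congr fun n => ?_
  rw [rpow_add hq, rpow_natCast, ← sqrt_eq_rpow, ← hsq, ← pow_mul, sqrt_sq (sqrt_nonneg q),
    ← pow_mul, ← pow_succ]
  ring_nf

theorem q_wallis_formula (q : ℝ) (hq0 : 0 < q) (hq1 : q < 1) :
    qGamma q (1 / 2) ^ 2
      = qNum (Real.sqrt q) 2 / qNumInf (Real.sqrt q) *
          ∏' n : ℕ, (qNum (Real.sqrt q) (2 * n + 2) / qNum (Real.sqrt q) (2 * n + 1)) ^ 2 := by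
  have hp0 : 0 ≤ √q := sqrt_nonneg q
  have hp1 : √q < 1 := (sqrt_lt' one_pos).2 (by rwa [one_pow])
  simp_rw [qNum_div_qNum hp1.ne, qNum_two_div_qNumInf hp1.ne, sq_sqrt hq0.le, qGamma_one_half hq0,
    mul_pow, sq_sqrt (sub_nonneg.2 hq1.le),
    (multipliable_one_sub_pow_even_div_one_sub_pow_odd hp0 hp1).tprod_pow]
end

section
/- For 0 < Q and 1/Q > 1/2, the integral of the Tsallis-type Gaussian ∫_{-∞}^{∞} (1 - Q x²)^{1/Q} dx over the region where it is defined (interpreted via the formula ∫_{-∞}^{∞} ẽ_{1-Q}(-x²) dx with ẽ_{1-Q}(u) = (1+Qu)^{1/Q} supported where 1+Qu ≥ 0) equals √(π/Q) · Γ(1 + 1/Q)/Γ(3/2 + 1/Q). -/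
/-! Scaling `x = t / √Q` reduces the integral to `∫_{-1}^{1} (1 - t²)^p` with `p = 1/Q`. The affine
change `t = 2u - 1` turns `1 - t²` into `4u(1 - u)`, so that integral is `2 · 4^p · B(p+1, p+1)`,
and Legendre's duplication formula for `Γ(2p + 2)` collapses this to `√π Γ(p+1) / Γ(p+3/2)`. -/

/-- The Tsallis-type Gaussian `ẽ_{1-Q}(-x²)`. -/
noncomputable def tsallisGaussian (Q x : ℝ) : ℝ :=
  if 0 ≤ 1 - Q * x ^ 2 then (1 - Q * x ^ 2) ^ (1 / Q) else 0

open MeasureTheory Set Real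

theorem integral_rpow_sub_one_mul_one_sub_rpow_sub_one {a b : ℝ} (ha : 0 < a) (hb : 0 < b) :
    ∫ x in (0:ℝ)..1, x ^ (a - 1) * (1 - x) ^ (b - 1) = Gamma a * Gamma b / Gamma (a + b) := by
  have hbeta : Complex.betaIntegral a b
      = ((∫ x in (0:ℝ)..1, x ^ (a - 1) * (1 - x) ^ (b - 1) : ℝ) : ℂ) := by
    rw [Complex.betaIntegral, ← intervalIntegral.integral_ofReal]
    refine intervalIntegral.integral_congr fun x hx => ?_
    rw [uIcc_of_le zero_le_one] at hx
    simp only [Complex.ofReal_mul, Complex.ofReal_cpow hx.1,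
      Complex.ofReal_cpow (sub_nonneg.2 hx.2), Complex.ofReal_sub, Complex.ofReal_one]
  have hGamma := Complex.Gamma_mul_Gamma_eq_betaIntegral (s := a) (t := b) (by simpa) (by simpa)
  rw [hbeta, ← Complex.ofReal_add, Complex.Gamma_ofReal, Complex.Gamma_ofReal,
    Complex.Gamma_ofReal] at hGamma
  rw [eq_div_iff (Gamma_pos_of_pos (add_pos ha hb)).ne', mul_comm]
  exact_mod_cast hGamma.symm

theorem integral_one_sub_sq_rpow_eq_beta (p : ℝ) :
    ∫ t in (-1:ℝ)..1, (1 - t ^ 2) ^ p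
      = 2 * 4 ^ p * ∫ u in (0:ℝ)..1, u ^ p * (1 - u) ^ p := by
  have hsub := intervalIntegral.mul_integral_comp_mul_add (f := fun t => (1 - t ^ 2) ^ p)
    (c := 2) (d := -1) (a := 0) (b := 1)
  norm_num at hsub
  rw [← hsub, mul_assoc, ← intervalIntegral.integral_const_mul (4 ^ p)]
  congr 1
  refine intervalIntegral.integral_congr fun u hu => ?_
  rw [uIcc_of_le zero_le_one] at hu
  rw [show 1 - (2 * u + -1) ^ 2 = 4 * (u * (1 - u)) by ring,
    mul_rpow zero_le_four (mul_nonneg hu.1 (sub_nonneg.2 hu.2)),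
    mul_rpow hu.1 (sub_nonneg.2 hu.2)]

theorem integral_one_sub_sq_rpow {p : ℝ} (hp : -1 < p) :
    ∫ t in (-1:ℝ)..1, (1 - t ^ 2) ^ p = √π * Gamma (p + 1) / Gamma (p + 3 / 2) := by
  have hbeta := integral_rpow_sub_one_mul_one_sub_rpow_sub_one (a := p + 1) (b := p + 1)
    (by linarith) (by linarith)
  simp only [add_sub_cancel_right] at hbeta
  have hdup := Gamma_mul_Gamma_add_half (p + 1)
  have hfour : (4:ℝ) ^ p * 2 ^ (1 - 2 * (p + 1)) = 2⁻¹ := by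
    rw [show (4:ℝ) = 2 ^ (2:ℝ) by norm_num, ← rpow_mul zero_le_two, ← rpow_add two_pos,
      show 2 * p + (1 - 2 * (p + 1)) = -1 by ring, rpow_neg_one]
  rw [integral_one_sub_sq_rpow_eq_beta, hbeta, ← two_mul, show p + 3 / 2 = p + 1 + 1 / 2 by ring]
  have hH : 0 < Gamma (p + 1 + 1 / 2) := Gamma_pos_of_pos (by linarith)
  have hD : 0 < Gamma (2 * (p + 1)) := Gamma_pos_of_pos (by linarith)
  rw [mul_div_assoc', div_eq_div_iff hD.ne' hH.ne']
  linear_combination (2 * 4 ^ p * Gamma (p + 1)) * hdup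
    + (2 * Gamma (p + 1) * Gamma (2 * (p + 1)) * √π) * hfour

theorem tsallisGaussian_eq_indicator {Q : ℝ} (hQ : 0 < Q) (x : ℝ) :
    tsallisGaussian Q x = (Icc (-1) 1).indicator (fun t => (1 - t ^ 2) ^ (1 / Q)) (√Q * x) := by
  have hsq : (√Q * x) ^ 2 = Q * x ^ 2 := by rw [mul_pow, sq_sqrt hQ.le]
  have hmem : √Q * x ∈ Icc (-1) 1 ↔ 0 ≤ 1 - Q * x ^ 2 := by
    rw [mem_Icc, ← abs_le, ← sq_le_one_iff_abs_le_one, hsq, sub_nonneg]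
  unfold tsallisGaussian
  split_ifs with h
  · rw [indicator_of_mem (hmem.2 h), hsq]
  · rw [indicator_of_notMem (mt hmem.1 h)]

theorem integral_tsallisGaussian {Q : ℝ} (hQ : 0 < Q) :
    ∫ x, tsallisGaussian Q x = (√Q)⁻¹ * ∫ t in (-1)..1, (1 - t ^ 2) ^ (1 / Q) := by
  simp_rw [tsallisGaussian_eq_indicator hQ]
  rw [Measure.integral_comp_mul_left, abs_of_pos (inv_pos.2 (sqrt_pos.2 hQ)), smul_eq_mul,
    integral_indicator measurableSet_Icc, intervalIntegral.integral_of_le (by norm_num),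
    integral_Icc_eq_integral_Ioc]

theorem tsallis_gaussian_integral_general (Q : ℝ) (hQ : 0 < Q) :
    ∫ x : ℝ, tsallisGaussian Q x
      = Real.sqrt (Real.pi / Q) * Real.Gamma (1 + 1 / Q) / Real.Gamma (3 / 2 + 1 / Q) := by
  have hp : -1 < 1 / Q := by linarith [one_div_pos.2 hQ]
  rw [integral_tsallisGaussian hQ, integral_one_sub_sq_rpow hp, sqrt_div pi_pos.le,
    add_comm 1, add_comm (3 / 2)]
  ring

theorem tsallis_gaussian_integral (Q : ℝ) (hQ : 0 < Q) (hQ' : 1 / 2 < 1 / Q) :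
    ∫ x : ℝ, tsallisGaussian Q x
      = Real.sqrt (Real.pi / Q) * Real.Gamma (1 + 1 / Q) / Real.Gamma (3 / 2 + 1 / Q) :=
  tsallis_gaussian_integral_general Q hQ
end
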